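/- Let f be a circle homeomorphism with irrational rotation number. If there exists an interval I ⊂ S¹ with |I| > 0 such that the lengths |f^n(I)| tend to 0 as n → +∞, then f has a wandering interval, and hence f is not topologically conjugate to a rotation. -/

import Mathlib

open Filter MeasureTheory

/-- A lift of a continuous, non-decreasing, degree-one circle map. -/
def IsCircleLift (F : ℝ → ℝ) : Prop :=
  Continuous F ∧ Monotone F ∧ ∀ x : ℝ, F (x + 1) = F x + 1

/-- A non-empty open interval (arc) of the circle. -/
def IsOpenArc (I : Set (AddCircle (1 : ℝ))) : Prop :=
  ∃ a b : ℝ, a < b ∧ b - a < 1 ∧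
    I = (fun x : ℝ => (x : AddCircle (1 : ℝ))) '' Set.Ioo a b

/-- A wandering interval for `f`. -/
def IsWanderingInterval (f : AddCircle (1 : ℝ) → AddCircle (1 : ℝ))
    (I : Set (AddCircle (1 : ℝ))) : Prop :=
  IsOpenArc I ∧ ∀ n m : ℕ, n ≠ m → f^[n] '' I ∩ f^[m] '' I = ∅

/-!
If some iterate `f^k(I)`, `k ≠ 0`, met `I`, then `H = F^k - p` would, for a suitable integer `p`,
map a point of the lifted interval `(a, b)` back into `(a, b)`. Since the rotation number `ρ` is
irrational, `H` has no fixed point, so it moves all points in the same direction and the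
overlapping intervals `H^j(a, b)` march off to infinity: finitely many iterates `f^(kj)(I)` cover
the circle. Pushing this cover forward by `f^t` keeps its total length at least `1` for every `t`,
which contradicts `|f^n(I)| → 0`. So `I` is wandering. A conjugacy to a rotation would carry `I`
to an open set of positive measure that never returns under a measure-preserving rotation,
contradicting Poincaré recurrence.
-/

open Set Function OrderDual Topology

section IterateCover

variable {α : Type*} [ConditionallyCompleteLinearOrder α] [TopologicalSpace α] [OrderTopology α]
  {L : α → α}

theorem exists_lt_iterate_of_forall_lt_self (hc : Continuous L) (hlt : ∀ x, x < L x)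
    (a M : α) : ∃ n, M < L^[n] a := by
  by_contra! hbdd
  have hmono : Monotone fun n => L^[n] a :=
    monotone_nat_of_le_succ fun n => by
      rw [iterate_succ_apply']
      exact (hlt _).le
  have hlim := tendsto_atTop_ciSup hmono ⟨M, forall_mem_range.2 hbdd⟩
  exact (hlt _).ne' (isFixedPt_of_tendsto_iterate hlim hc.continuousAt)

theorem Ioc_subset_biUnion_iterate_image_Ioo [DenselyOrdered α] (hc : Continuous L)
    (hm : StrictMono L) (hlt : ∀ x, x < L x) {a b : α} (hLa : L a < b) (M : α) :
    ∃ N, Ioc a M ⊆ ⋃ j ∈ Finset.range N, L^[j] '' Ioo a b := by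
  obtain ⟨N, hN⟩ := exists_lt_iterate_of_forall_lt_self hc hlt a M
  refine ⟨N, fun y hy => ?_⟩
  have hex : ∃ n, y ≤ L^[n] a := ⟨N, hy.2.trans hN.le⟩
  -- `j + 1` is the first time the orbit of `a` passes `y`; then `y ∈ L^[j] '' Ioo a b`.
  obtain ⟨j, hj⟩ : ∃ j, Nat.find hex = j + 1 :=
    Nat.exists_eq_succ_of_ne_zero fun h0 => hy.1.not_ge (by simpa [h0] using Nat.find_spec hex)
  have hja : L^[j] a < y := not_le.1 (Nat.find_min hex (by omega))
  have hjb : y < L^[j] b :=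
    calc y ≤ L^[j + 1] a := hj ▸ Nat.find_spec hex
      _ = L^[j] (L a) := iterate_succ_apply _ _ _
      _ < L^[j] b := hm.iterate j hLa
  have hjN : j < N := by
    have := Nat.find_min' hex (hy.2.trans hN.le)
    omega
  exact mem_biUnion (Finset.mem_range.2 hjN)
    (intermediate_value_Ioo ((hlt a).trans hLa).le (hc.iterate j).continuousOn ⟨hja, hjb⟩)

end IterateCover

theorem exists_Icc_subset_biUnion_iterate_image_Ioo {H : ℝ → ℝ} (hc : Continuous H)
    (hm : StrictMono H) (hH : (∀ x, x < H x) ∨ ∀ x, H x < x) {a b u : ℝ}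
    (hu : u ∈ Ioo a b) (hHu : H u ∈ Ioo a b) :
    ∃ N c, Icc c (c + 1) ⊆ ⋃ j ∈ Finset.range N, H^[j] '' Ioo a b := by
  rcases hH with hlt | hgt
  · obtain ⟨N, hN⟩ := Ioc_subset_biUnion_iterate_image_Ioo hc hm hlt
      ((hm hu.1).trans hHu.2) (a + 2)
    exact ⟨N, a + 1, fun y hy => hN ⟨by linarith [hy.1], by linarith [hy.2]⟩⟩
  · -- In the order dual `H` moves every point up.
    obtain ⟨N, hN⟩ := Ioc_subset_biUnion_iterate_image_Ioo (α := ℝᵒᵈ) hc hm.dual hgt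
      (a := toDual b) (b := toDual a) (hHu.1.trans (hm hu.2)) (toDual (b - 2))
    rw [Ioc_toDual, Ioo_toDual] at hN
    exact ⟨N, b - 2, fun y hy => hN ⟨hy.1, show y < b by linarith [hy.2]⟩⟩

theorem UnitAddCircle.coe_eq_coe_iff {x y : ℝ} :
    (x : UnitAddCircle) = y ↔ ∃ m : ℤ, y = x + m := by
  rw [QuotientAddGroup.eq, AddSubgroup.mem_zmultiples_iff]
  refine exists_congr fun m => ?_
  simp only [zsmul_eq_mul, mul_one]
  constructor <;> intro h <;> linarith

def IsCircleLift.toCircleDeg1Lift {F : ℝ → ℝ} (hF : IsCircleLift F) : CircleDeg1Lift :=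
  ⟨⟨F, hF.2.1⟩, hF.2.2⟩

@[simp]
theorem IsCircleLift.coe_toCircleDeg1Lift {F : ℝ → ℝ} (hF : IsCircleLift F) :
    ⇑hF.toCircleDeg1Lift = F :=
  rfl

namespace CircleDeg1Lift

theorem strictMono_of_semiconj {G : CircleDeg1Lift} {g : UnitAddCircle → UnitAddCircle}
    (hg : Injective g) (hG : Semiconj ((↑) : ℝ → UnitAddCircle) G g) : StrictMono G := by
  refine G.strictMono_iff_injective.2 fun x y hxy => ?_
  have hxy' : (x : UnitAddCircle) = y := hg (by rw [← hG x, ← hG y, hxy])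
  obtain ⟨m, rfl⟩ := UnitAddCircle.coe_eq_coe_iff.1 hxy'
  rw [G.map_add_int, left_eq_add, Int.cast_eq_zero] at hxy
  simp [hxy]

theorem forall_lt_or_forall_gt_of_irrational (G : CircleDeg1Lift)
    (hτ : Irrational G.translationNumber) (p : ℤ) :
    (∀ x, G x < x + p) ∨ ∀ x, x + p < G x :=
  (hτ.ne_int p).lt_or_gt.imp G.map_lt_of_translationNumber_lt_int
    G.lt_map_of_int_lt_translationNumber

theorem exists_univ_subset_biUnion_iterate_image {G : CircleDeg1Lift}
    {g : UnitAddCircle → UnitAddCircle} (hc : Continuous G) (hm : StrictMono G)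
    (hG : Semiconj ((↑) : ℝ → UnitAddCircle) G g) (hτ : Irrational G.translationNumber)
    {k : ℕ} (hk : k ≠ 0) {a b : ℝ}
    (hI : (g^[k] '' ((↑) '' Ioo a b) ∩ (↑) '' Ioo a b).Nonempty) :
    ∃ N, univ ⊆ ⋃ j ∈ Finset.range N, g^[k * j] '' ((↑) '' Ioo a b) := by
  obtain ⟨_, ⟨_, ⟨u, hu, rfl⟩, rfl⟩, v, hv, hvu⟩ := hI
  have hGk : Semiconj ((↑) : ℝ → UnitAddCircle) ⇑(G ^ k) g^[k] := by
    rw [coe_pow]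
    exact hG.iterate_right k
  obtain ⟨p, hp⟩ := UnitAddCircle.coe_eq_coe_iff.1 (hvu.trans (hGk u).symm)
  set H : ℝ → ℝ := fun x => (G ^ k) x - p
  have hH : Semiconj ((↑) : ℝ → UnitAddCircle) H g^[k] := fun x => by
    rw [← hGk x, UnitAddCircle.coe_eq_coe_iff]
    exact ⟨p, by simp only [H]; ring⟩
  have hHm : StrictMono H := fun x y hxy => by
    simpa [H, coe_pow] using hm.iterate k hxy
  have hHlt : (∀ x, x < H x) ∨ ∀ x, H x < x := by
    rcases (G ^ k).forall_lt_or_forall_gt_of_irrational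
      (by rw [translationNumber_pow]; exact hτ.natCast_mul hk) p with h | h
    · exact Or.inr fun x => by simp only [H]; linarith [h x]
    · exact Or.inl fun x => by simp only [H]; linarith [h x]
  obtain ⟨N, c, hN⟩ := exists_Icc_subset_biUnion_iterate_image_Ioo
    ((G.continuous_pow hc k).sub continuous_const) hHm hHlt hu (by simpa [H, hp] using hv)
  refine ⟨N, ?_⟩
  calc univ = ((↑) : ℝ → UnitAddCircle) '' Ioc c (c + 1) :=
        (AddCircle.coe_image_Ioc_eq 1 c).symm
    _ ⊆ (↑) '' ⋃ j ∈ Finset.range N, H^[j] '' Ioo a b :=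
      image_mono (Ioc_subset_Icc_self.trans hN)
    _ = ⋃ j ∈ Finset.range N, g^[k * j] '' ((↑) '' Ioo a b) := by
      simp only [image_iUnion₂, iterate_mul, ← image_comp, (hH.iterate_right _).comp_eq]

end CircleDeg1Lift

theorem not_tendsto_measure_iterate_image_zero {X ι : Type*} [MeasurableSpace X]
    (μ : Measure X) [NeZero μ] {g : X → X} (hg : Surjective g) {s : Set X} {S : Finset ι}
    {e : ι → ℕ} (hcover : univ ⊆ ⋃ i ∈ S, g^[e i] '' s) :
    ¬ Tendsto (fun n => μ (g^[n] '' s)) atTop (𝓝 0) := by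
  intro h
  have hsum : Tendsto (fun t => ∑ i ∈ S, μ (g^[t + e i] '' s)) atTop (𝓝 0) := by
    simpa using tendsto_finsetSum S fun i _ => h.comp (tendsto_add_atTop_nat (e i))
  have hle : ∀ t, μ univ ≤ ∑ i ∈ S, μ (g^[t + e i] '' s) := fun t =>
    calc μ univ = μ (g^[t] '' univ) := by rw [image_univ, (hg.iterate t).range_eq]
      _ ≤ μ (⋃ i ∈ S, g^[t + e i] '' s) := by
        refine measure_mono ((image_mono hcover).trans ?_)
        simp only [image_iUnion₂, ← image_comp, ← iterate_add, subset_refl]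
      _ ≤ ∑ i ∈ S, μ (g^[t + e i] '' s) := measure_biUnion_finset_le _ _
  exact NeZero.ne μ <| Measure.measure_univ_eq_zero.1 <|
    nonpos_iff_eq_zero.1 (ge_of_tendsto' hsum hle)

theorem iterate_image_inter_eq_empty {X : Type*} {g : X → X} (hg : Injective g) {s : Set X}
    (hs : ∀ k ≠ 0, g^[k] '' s ∩ s = ∅) {n m : ℕ} (hnm : n ≠ m) :
    g^[n] '' s ∩ g^[m] '' s = ∅ := by
  wlog h : n < m generalizing n m
  · rw [inter_comm]
    exact this hnm.symm (by omega)
  obtain ⟨d, rfl⟩ := Nat.exists_eq_add_of_le h.le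
  rw [iterate_add, image_comp, ← image_inter (hg.iterate n), inter_comm, hs d (by omega),
    image_empty]

theorem IsWanderingInterval.not_semiconj_add {f : UnitAddCircle → UnitAddCircle}
    {J : Set UnitAddCircle} (hJ : IsWanderingInterval f J) (h : UnitAddCircle ≃ₜ UnitAddCircle)
    (σ : UnitAddCircle) : ¬ Semiconj h f (· + σ) := by
  intro hconj
  obtain ⟨⟨a, b, hab, -, rfl⟩, hwander⟩ := hJ
  have hopen : IsOpen (h '' ((↑) '' Ioo a b)) :=
    h.isOpen_image.2 (QuotientAddGroup.isOpenMap_coe _ isOpen_Ioo)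
  have hpos : volume (h '' ((↑) '' Ioo a b)) ≠ 0 :=
    (hopen.measure_pos _ ((nonempty_Ioo.2 hab).image _ |>.image _)).ne'
  obtain ⟨_, ⟨x, hx, rfl⟩, m, hm, hxm⟩ :=
    (measurePreserving_add_right volume σ).conservative.exists_mem_iterate_mem'
      hopen.measurableSet hpos
  rw [← (hconj.iterate_right m) x, h.injective.mem_set_image] at hxm
  exact (hwander m 0 hm).subset ⟨mem_image_of_mem _ hx, by rwa [iterate_zero, image_id]⟩

theorem wandering_of_shrinking_interval_general
    (f : AddCircle (1 : ℝ) ≃ₜ AddCircle (1 : ℝ)) (ρ : ℝ) (hirr : Irrational ρ)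
    (F : ℝ → ℝ) (hF : IsCircleLift F)
    (hlift : ∀ x : ℝ, ((F x : AddCircle (1 : ℝ))) = f (x : AddCircle (1 : ℝ)))
    (hρ : ∀ x : ℝ, Tendsto (fun n : ℕ => (F^[n] x - x) / n) atTop (nhds ρ))
    (I : Set (AddCircle (1 : ℝ))) (hI : IsOpenArc I)
    (hshrink : Tendsto (fun n : ℕ => volume ((⇑f)^[n] '' I)) atTop (nhds 0)) :
    (∃ J : Set (AddCircle (1 : ℝ)), IsWanderingInterval (⇑f) J) ∧
    ¬ ∃ (σ : ℝ) (h : AddCircle (1 : ℝ) ≃ₜ AddCircle (1 : ℝ)),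
        ∀ x : AddCircle (1 : ℝ), h (f x) = h x + (σ : AddCircle (1 : ℝ)) := by
  have hτ : hF.toCircleDeg1Lift.translationNumber = ρ :=
    tendsto_nhds_unique (CircleDeg1Lift.tendsto_translationNumber _ 0)
      (by simpa [CircleDeg1Lift.coe_pow] using hρ 0)
  have hmono : StrictMono hF.toCircleDeg1Lift :=
    CircleDeg1Lift.strictMono_of_semiconj f.injective hlift
  have hreturn : ∀ k ≠ 0, (⇑f)^[k] '' I ∩ I = ∅ := by
    intro k hk
    by_contra hne
    obtain ⟨a, b, -, -, rfl⟩ := hI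
    obtain ⟨N, hN⟩ := CircleDeg1Lift.exists_univ_subset_biUnion_iterate_image hF.1 hmono hlift
      (hτ ▸ hirr) hk (nonempty_iff_ne_empty.2 hne)
    exact not_tendsto_measure_iterate_image_zero volume f.surjective hN hshrink
  have hJ : IsWanderingInterval f I :=
    ⟨hI, fun _ _ => iterate_image_inter_eq_empty f.injective hreturn⟩
  exact ⟨⟨I, hJ⟩, fun ⟨σ, h, hconj⟩ => hJ.not_semiconj_add h σ hconj⟩

/-- if some interval of positive length has iterates whose lengths
tend to 0, then `f` has a wandering interval and is not conjugate to a rotation. -/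
theorem wandering_of_shrinking_interval
    (f : AddCircle (1 : ℝ) ≃ₜ AddCircle (1 : ℝ)) (ρ : ℝ) (hirr : Irrational ρ)
    (F : ℝ → ℝ) (hF : IsCircleLift F)
    (hlift : ∀ x : ℝ, ((F x : AddCircle (1 : ℝ))) = f (x : AddCircle (1 : ℝ)))
    (hρ : ∀ x : ℝ, Tendsto (fun n : ℕ => (F^[n] x - x) / n) atTop (nhds ρ))
    (I : Set (AddCircle (1 : ℝ))) (hI : IsOpenArc I) (hpos : 0 < volume I)
    (hshrink : Tendsto (fun n : ℕ => volume ((⇑f)^[n] '' I)) atTop (nhds 0)) :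
    (∃ J : Set (AddCircle (1 : ℝ)), IsWanderingInterval (⇑f) J) ∧
    ¬ ∃ (σ : ℝ) (h : AddCircle (1 : ℝ) ≃ₜ AddCircle (1 : ℝ)),
        ∀ x : AddCircle (1 : ℝ), h (f x) = h x + (σ : AddCircle (1 : ℝ)) :=
  wandering_of_shrinking_interval_general f ρ hirr F hF hlift hρ I hI hshrink
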